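/- arXiv:1708.05397 — 4 statements merged into one kernel-verified Lean document; each statement's English description precedes it below -/
import Mathlib

section
/- Superposition Principle: if f is perfectly harmonic on an open set Ω₁ ⊆ ℝ^N and g is perfectly harmonic on an open set Ω₂ ⊆ ℝ^M, then for any real constants α and β the function h(x,y) = α·f(x) + β·g(y) is perfectly harmonic on Ω₁ × Ω₂ ⊆ ℝ^{N+M}. -/
/-!
`h(x, y) = α f(x) + β g(y)` depends on the two blocks of variables separately, so its gradient is
`(α ∇f, β ∇g)` and its Hessian is block diagonal with blocks `α D²f` and `β D²g`. Hence
`Δh = α Δf + β Δg` and `Δ_∞ h = α³ Δ_∞ f + β³ Δ_∞ g`, and both vanish when `f` and `g` are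
perfectly harmonic.
-/

noncomputable section

/-- The partial derivative `∂f/∂xᵢ` of a function on `ℝ^N`. -/
noncomputable def pd {N : ℕ} (f : (Fin N → ℝ) → ℝ) (i : Fin N) (x : Fin N → ℝ) : ℝ :=
  fderiv ℝ f x (Pi.single i 1)

/-- The Laplacian `Δf = Σᵢ ∂²f/∂xᵢ²`. -/
noncomputable def lap {N : ℕ} (f : (Fin N → ℝ) → ℝ) (x : Fin N → ℝ) : ℝ :=
  ∑ i, pd (pd f i) i x

/-- The ∞-Laplacian `Δ_∞ f = Σᵢⱼ (∂f/∂xᵢ)(∂f/∂xⱼ)(∂²f/∂xᵢ∂xⱼ)`. -/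
noncomputable def infLap {N : ℕ} (f : (Fin N → ℝ) → ℝ) (x : Fin N → ℝ) : ℝ :=
  ∑ i, ∑ j, pd f i x * pd f j x * pd (pd f j) i x

/-- The 1-Laplacian `Δ₁f = |∇f|²Δf − Δ_∞f`. -/
noncomputable def lap1 {N : ℕ} (f : (Fin N → ℝ) → ℝ) (x : Fin N → ℝ) : ℝ :=
  (∑ i, pd f i x ^ 2) * lap f x - infLap f x

/-- A C² function is perfectly harmonic on `Ω` if `Δf = 0` and `Δ_∞ f = 0` on `Ω`. -/
def PerfectlyHarmonic {N : ℕ} (f : (Fin N → ℝ) → ℝ) (Ω : Set (Fin N → ℝ)) : Prop :=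
  ContDiffOn ℝ 2 f Ω ∧ ∀ x ∈ Ω, lap f x = 0 ∧ infLap f x = 0

/-- Two C² functions `u, v` are orthogonal twin-harmonics on `Ω` if at every point of `Ω`:
`v·Δu = u·Δv`, `v·Δ_∞u = u·Δ_∞v`, `|∇u|² = |∇v|²`, and `∇u·∇v = 0`. -/
def TwinHarmonics {N : ℕ} (u v : (Fin N → ℝ) → ℝ) (Ω : Set (Fin N → ℝ)) : Prop :=
  ContDiffOn ℝ 2 u Ω ∧ ContDiffOn ℝ 2 v Ω ∧ ∀ x ∈ Ω,
    v x * lap u x = u x * lap v x ∧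
    v x * infLap u x = u x * infLap v x ∧
    (∑ i, pd u i x ^ 2) = (∑ i, pd v i x ^ 2) ∧
    (∑ i, pd u i x * pd v i x) = 0

open Topology

section PartialDerivative

variable {n m : ℕ} {u v : (Fin n → ℝ) → ℝ} {x : Fin n → ℝ}

theorem pd_add (hu : DifferentiableAt ℝ u x) (hv : DifferentiableAt ℝ v x) (k : Fin n) :
    pd (fun y => u y + v y) k x = pd u k x + pd v k x := by
  simp [pd, fderiv_fun_add hu hv]

theorem pd_const_mul_comp (L : (Fin n → ℝ) →L[ℝ] (Fin m → ℝ)) {φ : (Fin m → ℝ) → ℝ}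
    (c : ℝ) (hφ : DifferentiableAt ℝ φ (L x)) (k : Fin n) :
    pd (fun y => c * φ (L y)) k x = c * fderiv ℝ φ (L x) (L (Pi.single k 1)) := by
  have hcomp : HasFDerivAt (fun y => c * φ (L y)) (c • (fderiv ℝ φ (L x)).comp L) x :=
    (hφ.hasFDerivAt.comp x L.hasFDerivAt).const_mul c
  simp [pd, hcomp.fderiv]

theorem Filter.EventuallyEq.pd_eq (h : u =ᶠ[𝓝 x] v) (k : Fin n) : pd u k x = pd v k x := by
  rw [pd, pd, h.fderiv_eq]

theorem fderiv_apply_single (k : Fin n) : fderiv ℝ u x (Pi.single k 1) = pd u k x := rfl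

theorem ContDiffAt.differentiableAt_pd (hu : ContDiffAt ℝ 2 u x) (k : Fin n) :
    DifferentiableAt ℝ (pd u k) x :=
  ((hu.fderiv_right le_rfl).clm_apply contDiffAt_const).differentiableAt one_ne_zero

end PartialDerivative

section Blocks

variable (N M : ℕ)

def fstBlock : (Fin (N + M) → ℝ) →L[ℝ] (Fin N → ℝ) :=
  ContinuousLinearMap.pi fun i => ContinuousLinearMap.proj (Fin.castAdd M i)

def sndBlock : (Fin (N + M) → ℝ) →L[ℝ] (Fin M → ℝ) :=
  ContinuousLinearMap.pi fun j => ContinuousLinearMap.proj (Fin.natAdd N j)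

variable {N M}

@[simp]
theorem fstBlock_single_castAdd (i : Fin N) (a : ℝ) :
    fstBlock N M (Pi.single (Fin.castAdd M i) a) = Pi.single i a := by
  ext i'
  simp [fstBlock, Pi.single_apply, Fin.castAdd_inj]

@[simp]
theorem fstBlock_single_natAdd (j : Fin M) (a : ℝ) :
    fstBlock N M (Pi.single (Fin.natAdd N j) a) = 0 := by
  ext i'
  simp [fstBlock, Pi.single_apply, Fin.ext_iff]
  omega

@[simp]
theorem sndBlock_single_natAdd (j : Fin M) (a : ℝ) :
    sndBlock N M (Pi.single (Fin.natAdd N j) a) = Pi.single j a := by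
  ext j'
  simp [sndBlock, Pi.single_apply]

@[simp]
theorem sndBlock_single_castAdd (i : Fin N) (a : ℝ) :
    sndBlock N M (Pi.single (Fin.castAdd M i) a) = 0 := by
  ext j'
  simp [sndBlock, Pi.single_apply, Fin.ext_iff]
  omega

end Blocks

theorem ContDiffAt.eventually_differentiableAt_comp {E F : Type*} [NormedAddCommGroup E]
    [NormedSpace ℝ E] [NormedAddCommGroup F] [NormedSpace ℝ F] {φ : F → ℝ} (L : E →L[ℝ] F)
    {x : E} (hφ : ContDiffAt ℝ 1 φ (L x)) : ∀ᶠ y in 𝓝 x, DifferentiableAt ℝ φ (L y) :=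
  (L.continuous.tendsto x).eventually <|
    (hφ.eventually (by simp)).mono fun _ h => h.differentiableAt one_ne_zero

section Superposition

variable {N M : ℕ}

def superpose (α : ℝ) (f : (Fin N → ℝ) → ℝ) (β : ℝ) (g : (Fin M → ℝ) → ℝ) :
    (Fin (N + M) → ℝ) → ℝ :=
  fun x => α * f (fstBlock N M x) + β * g (sndBlock N M x)

variable {f : (Fin N → ℝ) → ℝ} {g : (Fin M → ℝ) → ℝ} {α β : ℝ} {x : Fin (N + M) → ℝ}

theorem ContDiffOn.superpose {n : WithTop ℕ∞} {Ω₁ : Set (Fin N → ℝ)} {Ω₂ : Set (Fin M → ℝ)}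
    (hf : ContDiffOn ℝ n f Ω₁) (hg : ContDiffOn ℝ n g Ω₂) :
    ContDiffOn ℝ n (superpose α f β g) (fstBlock N M ⁻¹' Ω₁ ∩ sndBlock N M ⁻¹' Ω₂) :=
  (contDiffOn_const.mul (hf.comp (fstBlock N M).contDiff.contDiffOn fun _ hy => hy.1)).add
    (contDiffOn_const.mul (hg.comp (sndBlock N M).contDiff.contDiffOn fun _ hy => hy.2))

theorem pd_superpose (hf : DifferentiableAt ℝ f (fstBlock N M x))
    (hg : DifferentiableAt ℝ g (sndBlock N M x)) (k : Fin (N + M)) :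
    pd (superpose α f β g) k x =
      α * fderiv ℝ f (fstBlock N M x) (fstBlock N M (Pi.single k 1)) +
        β * fderiv ℝ g (sndBlock N M x) (sndBlock N M (Pi.single k 1)) := by
  unfold superpose
  rw [pd_add (by fun_prop) (by fun_prop), pd_const_mul_comp _ _ hf,
    pd_const_mul_comp _ _ hg]

theorem pd_superpose_castAdd (hf : DifferentiableAt ℝ f (fstBlock N M x))
    (hg : DifferentiableAt ℝ g (sndBlock N M x)) (i : Fin N) :
    pd (superpose α f β g) (Fin.castAdd M i) x = α * pd f i (fstBlock N M x) := by
  simp [pd_superpose hf hg, fderiv_apply_single]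

theorem pd_superpose_natAdd (hf : DifferentiableAt ℝ f (fstBlock N M x))
    (hg : DifferentiableAt ℝ g (sndBlock N M x)) (j : Fin M) :
    pd (superpose α f β g) (Fin.natAdd N j) x = β * pd g j (sndBlock N M x) := by
  simp [pd_superpose hf hg, fderiv_apply_single]

theorem pd_superpose_castAdd_eventuallyEq (hf : ContDiffAt ℝ 1 f (fstBlock N M x))
    (hg : ContDiffAt ℝ 1 g (sndBlock N M x)) (i : Fin N) :
    pd (superpose α f β g) (Fin.castAdd M i) =ᶠ[𝓝 x] fun y => α * pd f i (fstBlock N M y) := by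
  filter_upwards [hf.eventually_differentiableAt_comp, hg.eventually_differentiableAt_comp]
    with y hfy hgy using pd_superpose_castAdd hfy hgy i

theorem pd_superpose_natAdd_eventuallyEq (hf : ContDiffAt ℝ 1 f (fstBlock N M x))
    (hg : ContDiffAt ℝ 1 g (sndBlock N M x)) (j : Fin M) :
    pd (superpose α f β g) (Fin.natAdd N j) =ᶠ[𝓝 x] fun y => β * pd g j (sndBlock N M y) := by
  filter_upwards [hf.eventually_differentiableAt_comp, hg.eventually_differentiableAt_comp]
    with y hfy hgy using pd_superpose_natAdd hfy hgy j

theorem pd_pd_superpose_castAdd (hf : ContDiffAt ℝ 2 f (fstBlock N M x))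
    (hg : ContDiffAt ℝ 2 g (sndBlock N M x)) (i : Fin N) (k : Fin (N + M)) :
    pd (pd (superpose α f β g) (Fin.castAdd M i)) k x =
      α * fderiv ℝ (pd f i) (fstBlock N M x) (fstBlock N M (Pi.single k 1)) := by
  rw [(pd_superpose_castAdd_eventuallyEq (hf.of_le one_le_two) (hg.of_le one_le_two) i).pd_eq,
    pd_const_mul_comp _ _ (hf.differentiableAt_pd i)]

theorem pd_pd_superpose_natAdd (hf : ContDiffAt ℝ 2 f (fstBlock N M x))
    (hg : ContDiffAt ℝ 2 g (sndBlock N M x)) (j : Fin M) (k : Fin (N + M)) :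
    pd (pd (superpose α f β g) (Fin.natAdd N j)) k x =
      β * fderiv ℝ (pd g j) (sndBlock N M x) (sndBlock N M (Pi.single k 1)) := by
  rw [(pd_superpose_natAdd_eventuallyEq (hf.of_le one_le_two) (hg.of_le one_le_two) j).pd_eq,
    pd_const_mul_comp _ _ (hg.differentiableAt_pd j)]

theorem lap_superpose (hf : ContDiffAt ℝ 2 f (fstBlock N M x))
    (hg : ContDiffAt ℝ 2 g (sndBlock N M x)) :
    lap (superpose α f β g) x = α * lap f (fstBlock N M x) + β * lap g (sndBlock N M x) := by
  simp [lap, Fin.sum_univ_add, pd_pd_superpose_castAdd hf hg, pd_pd_superpose_natAdd hf hg,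
    fderiv_apply_single, Finset.mul_sum]

theorem infLap_superpose (hf : ContDiffAt ℝ 2 f (fstBlock N M x))
    (hg : ContDiffAt ℝ 2 g (sndBlock N M x)) :
    infLap (superpose α f β g) x =
      α ^ 3 * infLap f (fstBlock N M x) + β ^ 3 * infLap g (sndBlock N M x) := by
  have hf₁ := (hf.of_le one_le_two).differentiableAt one_ne_zero
  have hg₁ := (hg.of_le one_le_two).differentiableAt one_ne_zero
  simp only [infLap, Fin.sum_univ_add, pd_superpose_castAdd hf₁ hg₁,
    pd_superpose_natAdd hf₁ hg₁, pd_pd_superpose_castAdd hf hg, pd_pd_superpose_natAdd hf hg,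
    fstBlock_single_castAdd, fstBlock_single_natAdd, sndBlock_single_castAdd,
    sndBlock_single_natAdd, fderiv_apply_single, map_zero, mul_zero, Finset.sum_const_zero,
    add_zero, zero_add, Finset.mul_sum]
  congr 1 <;> exact Finset.sum_congr rfl fun _ _ => Finset.sum_congr rfl fun _ _ => by ring

end Superposition

/-- **Superposition Principle.** If `f` is perfectly harmonic on an open `Ω₁ ⊆ ℝ^N` and `g` is
perfectly harmonic on an open `Ω₂ ⊆ ℝ^M`, then for any real `α, β` the function
`h(x,y) = α·f(x) + β·g(y)` is perfectly harmonic on `Ω₁ × Ω₂ ⊆ ℝ^(N+M)`. -/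
theorem superposition_principle {N M : ℕ}
    (f : (Fin N → ℝ) → ℝ) (g : (Fin M → ℝ) → ℝ)
    (Ω₁ : Set (Fin N → ℝ)) (Ω₂ : Set (Fin M → ℝ))
    (hΩ₁ : IsOpen Ω₁) (hΩ₂ : IsOpen Ω₂)
    (hf : PerfectlyHarmonic f Ω₁) (hg : PerfectlyHarmonic g Ω₂)
    (α β : ℝ) :
    PerfectlyHarmonic
      (fun x : Fin (N + M) → ℝ =>
        α * f (fun i => x (Fin.castAdd M i)) + β * g (fun j => x (Fin.natAdd N j)))
      {x : Fin (N + M) → ℝ |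
        (fun i => x (Fin.castAdd M i)) ∈ Ω₁ ∧ (fun j => x (Fin.natAdd N j)) ∈ Ω₂} := by
  change PerfectlyHarmonic (superpose α f β g) (fstBlock N M ⁻¹' Ω₁ ∩ sndBlock N M ⁻¹' Ω₂)
  refine ⟨hf.1.superpose hg.1, fun x ⟨hx₁, hx₂⟩ => ?_⟩
  have hf₂ : ContDiffAt ℝ 2 f (fstBlock N M x) := hf.1.contDiffAt (hΩ₁.mem_nhds hx₁)
  have hg₂ : ContDiffAt ℝ 2 g (sndBlock N M x) := hg.1.contDiffAt (hΩ₂.mem_nhds hx₂)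
  rw [lap_superpose hf₂ hg₂, infLap_superpose hf₂ hg₂, (hf.2 _ hx₁).1, (hf.2 _ hx₁).2,
    (hg.2 _ hx₂).1, (hg.2 _ hx₂).2]
  simp

end
end

section
/- For any real constants a and b, the function g(x₁,x₂) = a + b·arctan(x₂/x₁) is perfectly harmonic on the open set {(x₁,x₂) ∈ ℝ² : x₁ ≠ 0}. -/
noncomputable section

/-!
The angle θ = arctan(x₂/x₁) has gradient (−x₂, x₁)/|x|². Hence ∇g = b(−x₂, x₁)/|x|² is
divergence free, and |∇g|² = b²/|x|² is radial while ∇g is tangential, so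
Δ_∞g = ½∇g·∇|∇g|² = 0. Each first partial of g is a function x ↦ v·x/|x|² (a linear form
composed with the inversion x ↦ x/|x|²), whose partials are explicit, so both identities reduce
to a rational-function computation.
-/

open Real Filter Topology
open scoped Matrix

def dotInversion {N : ℕ} (v x : Fin N → ℝ) : ℝ := (v ⬝ᵥ x) / (x ⬝ᵥ x)

theorem pd_eq_of_hasFDerivAt {N : ℕ} {f : (Fin N → ℝ) → ℝ} {f' : (Fin N → ℝ) →L[ℝ] ℝ}
    {x : Fin N → ℝ} (hf : HasFDerivAt f f' x) (i : Fin N) : pd f i x = f' (Pi.single i 1) := by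
  rw [pd, hf.fderiv]

theorem pd_congr_of_eventuallyEq {N : ℕ} {f g : (Fin N → ℝ) → ℝ} {x : Fin N → ℝ}
    (h : f =ᶠ[𝓝 x] g) (i : Fin N) : pd f i x = pd g i x := by
  rw [pd, pd, h.fderiv_eq]

theorem lap_eq_of_pd_eventuallyEq {N : ℕ} {f : (Fin N → ℝ) → ℝ}
    {G : Fin N → (Fin N → ℝ) → ℝ} {x : Fin N → ℝ} (h : ∀ i, pd f i =ᶠ[𝓝 x] G i) :
    lap f x = ∑ i, pd (G i) i x :=
  Finset.sum_congr rfl fun i _ => pd_congr_of_eventuallyEq (h i) i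

theorem infLap_eq_of_pd_eventuallyEq {N : ℕ} {f : (Fin N → ℝ) → ℝ}
    {G : Fin N → (Fin N → ℝ) → ℝ} {x : Fin N → ℝ} (h : ∀ i, pd f i =ᶠ[𝓝 x] G i) :
    infLap f x = ∑ i, ∑ j, G i x * G j x * pd (G j) i x := by
  simp only [infLap, (h _).eq_of_nhds, pd_congr_of_eventuallyEq (h _)]

theorem pd_dotInversion {N : ℕ} (v : Fin N → ℝ) {x : Fin N → ℝ} (hx : x ≠ 0) (i : Fin N) :
    pd (dotInversion v) i x = (v i * (x ⬝ᵥ x) - 2 * (v ⬝ᵥ x) * x i) / (x ⬝ᵥ x) ^ 2 := by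
  have hS : x ⬝ᵥ x ≠ 0 := mt dotProduct_self_eq_zero.mp hx
  have hnum := HasFDerivAt.fun_sum (u := Finset.univ) fun j _ =>
    (hasFDerivAt_apply (𝕜 := ℝ) j x).const_mul (v j)
  have hden := HasFDerivAt.fun_sum (u := Finset.univ) fun j _ =>
    (hasFDerivAt_apply (𝕜 := ℝ) j x).fun_mul (hasFDerivAt_apply (𝕜 := ℝ) j x)
  have hq := (hnum.fun_mul ((hasDerivAt_inv (x := ∑ j, x j * x j) hS).comp_hasFDerivAt x hden))
    |>.congr_of_eventuallyEq (f₁ := dotInversion v)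
      (.of_forall fun y => by simp [dotInversion, dotProduct, div_eq_mul_inv])
  rw [pd_eq_of_hasFDerivAt hq]
  simp only [dotProduct, Function.comp_apply, add_apply, smul_apply, sum_apply,
    ContinuousLinearMap.proj_apply, Pi.single_apply, smul_eq_mul, mul_ite, mul_one, mul_zero,
    Finset.sum_add_distrib, Finset.sum_ite_eq', Finset.mem_univ, if_true]
  field_simp
  ring

theorem hasFDerivAt_arctan_div {x : Fin 2 → ℝ} (hx : x 0 ≠ 0) :
    HasFDerivAt (fun y : Fin 2 → ℝ => arctan (y 1 / y 0))
      ((x 0 ^ 2 + x 1 ^ 2)⁻¹ • (x 0 • .proj 1 - x 1 • .proj 0 : (Fin 2 → ℝ) →L[ℝ] ℝ)) x := by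
  have hderiv := ((hasFDerivAt_apply (𝕜 := ℝ) 1 x).fun_mul
    ((hasDerivAt_inv hx).comp_hasFDerivAt x (hasFDerivAt_apply (𝕜 := ℝ) 0 x))).arctan
    |>.congr_of_eventuallyEq (f₁ := fun y : Fin 2 → ℝ => arctan (y 1 / y 0))
      (.of_forall fun y => by simp [div_eq_mul_inv])
  refine hderiv.congr_fderiv (ContinuousLinearMap.ext fun y => ?_)
  have : x 0 ^ 2 + x 1 ^ 2 ≠ 0 := by positivity
  simp only [Function.comp_apply, smul_apply, add_apply, sub_apply, ContinuousLinearMap.proj_apply,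
    smul_eq_mul]
  field_simp
  ring

theorem pd_arctan_div {x : Fin 2 → ℝ} (hx : x 0 ≠ 0) (a b : ℝ) (i : Fin 2) :
    pd (fun y : Fin 2 → ℝ => a + b * arctan (y 1 / y 0)) i x =
      dotInversion (![![0, -b], ![b, 0]] i) x := by
  rw [pd_eq_of_hasFDerivAt (((hasFDerivAt_arctan_div hx).const_mul b).const_add a)]
  fin_cases i <;>
    simp only [Fin.zero_eta, Fin.mk_one, smul_apply, sub_apply, ContinuousLinearMap.proj_apply,
      Pi.single_eq_same, Pi.single_eq_of_ne zero_ne_one, Pi.single_eq_of_ne one_ne_zero,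
      smul_eq_mul, dotInversion, dotProduct, Fin.sum_univ_two, Matrix.cons_val_zero,
      Matrix.cons_val_one] <;>
    ring

theorem contDiffOn_arctan_div (a b : ℝ) :
    ContDiffOn ℝ 2 (fun x : Fin 2 → ℝ => a + b * arctan (x 1 / x 0)) {x | x 0 ≠ 0} :=
  contDiffOn_const.add <| contDiffOn_const.mul <| contDiff_arctan.comp_contDiffOn <|
    (contDiff_apply ℝ ℝ 1).contDiffOn.div (contDiff_apply ℝ ℝ 0).contDiffOn fun _ hx => hx

/-- For any real `a, b`, the function `g(x₁,x₂) = a + b·arctan(x₂/x₁)` is perfectly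
harmonic on the open set `{(x₁,x₂) ∈ ℝ² : x₁ ≠ 0}`. -/
theorem arctan_perfectly_harmonic (a b : ℝ) :
    PerfectlyHarmonic (fun x : Fin 2 → ℝ => a + b * Real.arctan (x 1 / x 0))
      {x : Fin 2 → ℝ | x 0 ≠ 0} := by
  refine ⟨contDiffOn_arctan_div a b, fun x (hx : x 0 ≠ 0) => ?_⟩
  have hΩ : IsOpen {y : Fin 2 → ℝ | y 0 ≠ 0} :=
    isOpen_ne_fun (continuous_apply 0) continuous_const
  have hgrad : ∀ i, pd (fun y : Fin 2 → ℝ => a + b * arctan (y 1 / y 0)) i =ᶠ[𝓝 x]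
      dotInversion (![![0, -b], ![b, 0]] i) := fun i =>
    eventually_of_mem (hΩ.mem_nhds hx) fun y hy => pd_arctan_div hy a b i
  have hx0 : x ≠ 0 := ne_of_apply_ne (· 0) hx
  rw [lap_eq_of_pd_eventuallyEq hgrad, infLap_eq_of_pd_eventuallyEq hgrad]
  simp only [Fin.sum_univ_two, pd_dotInversion _ hx0, dotInversion, dotProduct,
    Matrix.cons_val_zero, Matrix.cons_val_one]
  constructor <;> field_simp <;> ring

end
end

section
/- Let Ω ⊆ ℝ^N be open, let u be a C² function on Ω, and let v be a C² function on Ω with v(x) ≠ 0 for all x ∈ Ω. Then there exists a continuous function μ on Ω with Δ₁u = μ·u on Ω if and only if there exists a continuous function ν on Ω with Δ₁(u·v) = ν·(u·v) on Ω. -/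
/-!
Writing `Δ₁f = L(∇f, ∇f, D²f)` with the form `L(a, b, M) = (a·b) tr M − a·Mb`, which is linear in
each argument, and substituting `∇(uv) = v∇u + u∇v` and
`D²(uv) = vD²u + ∇u⊗∇v + ∇v⊗∇u + uD²v`, every term of `Δ₁(uv)` carries a factor `u` except
`v³Δ₁u` and `v²L(∇u, ∇u, ∇u⊗∇v + ∇v⊗∇u)`, and the latter vanishes. So `Δ₁(uv) = v³Δ₁u + uR`
with `R` continuous, and the weights correspond through `ν = v²μ + R/v`.
-/

noncomputable section

open Matrix

def lap1Form {R n : Type*} [CommRing R] [Fintype n] (a b : n → R) (M : Matrix n n R) : R :=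
  (a ⬝ᵥ b) * M.trace - a ⬝ᵥ (M *ᵥ b)

section lap1Form

variable {R n : Type*} [CommRing R] [Fintype n]

lemma lap1Form_add_add (s t : R) (p q : n → R) (M : Matrix n n R) :
    lap1Form (s • p + t • q) (s • p + t • q) M = s ^ 2 * lap1Form p p M
      + s * t * (lap1Form p q M + lap1Form q p M) + t ^ 2 * lap1Form q q M := by
  simp only [lap1Form, add_dotProduct, dotProduct_add, smul_dotProduct, dotProduct_smul,
    mulVec_add, mulVec_smul, smul_eq_mul]
  ring

lemma lap1Form_vecMulVec_add_vecMulVec (p q : n → R) :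
    lap1Form p p (vecMulVec p q + vecMulVec q p) = 0 := by
  simp only [lap1Form, trace_add, trace_vecMulVec, add_mulVec, vecMulVec_mulVec, op_smul_eq_smul,
    dotProduct_add, dotProduct_smul, smul_eq_mul, dotProduct_comm q p]
  ring

lemma lap1Form_expand (s t : R) (p q : n → R) (H K M : Matrix n n R)
    (hM : M = s • H + vecMulVec p q + vecMulVec q p + t • K) :
    lap1Form (s • p + t • q) (s • p + t • q) M = s ^ 3 * lap1Form p p H + t *
      (s ^ 2 * lap1Form p p K + s * (lap1Form p q M + lap1Form q p M) + t * lap1Form q q M) := by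
  have hpp : lap1Form p p M = s * lap1Form p p H + t * lap1Form p p K := by
    have hcross := lap1Form_vecMulVec_add_vecMulVec p q
    simp only [lap1Form, hM, trace_add, trace_smul, add_mulVec, smul_mulVec, dotProduct_add,
      dotProduct_smul, smul_eq_mul] at hcross ⊢
    linear_combination hcross
  rw [lap1Form_add_add, hpp]
  ring

@[fun_prop]
lemma ContinuousOn.lap1Form {X : Type*} [TopologicalSpace X] {a b : X → n → ℝ}
    {M : X → Matrix n n ℝ} {s : Set X} (ha : ContinuousOn a s) (hb : ContinuousOn b s)
    (hM : ContinuousOn M s) : ContinuousOn (fun x => lap1Form (a x) (b x) (M x)) s := by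
  have hcont : Continuous fun z : (n → ℝ) × (n → ℝ) × Matrix n n ℝ =>
      _root_.lap1Form z.1 z.2.1 z.2.2 := by
    unfold _root_.lap1Form
    fun_prop
  exact hcont.comp_continuousOn (ha.prodMk (hb.prodMk hM))

end lap1Form

def grad {N : ℕ} (f : (Fin N → ℝ) → ℝ) (x : Fin N → ℝ) : Fin N → ℝ :=
  fun i => pd f i x

def hess {N : ℕ} (f : (Fin N → ℝ) → ℝ) (x : Fin N → ℝ) : Matrix (Fin N) (Fin N) ℝ :=
  Matrix.of fun i j => pd (pd f j) i x

section derivatives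

variable {N : ℕ} {Ω : Set (Fin N → ℝ)} {f g u v : (Fin N → ℝ) → ℝ} {x : Fin N → ℝ}

lemma lap1_eq_lap1Form (f : (Fin N → ℝ) → ℝ) (x : Fin N → ℝ) :
    lap1 f x = lap1Form (grad f x) (grad f x) (hess f x) := by
  simp only [lap1, lap, infLap, lap1Form, grad, hess, dotProduct, trace, diag, mulVec, of_apply, sq,
    Finset.sum_mul, Finset.mul_sum]
  congr 1
  exact Finset.sum_congr rfl fun i _ => Finset.sum_congr rfl fun j _ => by ring

lemma pd_add_s5 (hf : DifferentiableAt ℝ f x) (hg : DifferentiableAt ℝ g x) (i : Fin N) :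
    pd (fun y => f y + g y) i x = pd f i x + pd g i x := by
  simp only [pd, fderiv_fun_add hf hg, _root_.add_apply]

lemma pd_mul (hu : DifferentiableAt ℝ u x) (hv : DifferentiableAt ℝ v x) (i : Fin N) :
    pd (fun y => u y * v y) i x = v x * pd u i x + u x * pd v i x := by
  simp only [pd, fderiv_fun_mul hu hv, _root_.add_apply, _root_.smul_apply, smul_eq_mul]
  ring

lemma grad_mul (hu : DifferentiableAt ℝ u x) (hv : DifferentiableAt ℝ v x) :
    grad (fun y => u y * v y) x = v x • grad u x + u x • grad v x :=
  funext (pd_mul hu hv)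

lemma ContDiffOn.differentiableAt_of_isOpen {n : WithTop ℕ∞} (hΩ : IsOpen Ω)
    (hf : ContDiffOn ℝ n f Ω) (hx : x ∈ Ω) (hn : n ≠ 0) : DifferentiableAt ℝ f x :=
  (hf.contDiffAt (hΩ.mem_nhds hx)).differentiableAt hn

lemma ContDiffOn.contDiffOn_pd (hΩ : IsOpen Ω) (hf : ContDiffOn ℝ 2 f Ω) (i : Fin N) :
    ContDiffOn ℝ 1 (pd f i) Ω :=
  (hf.fderiv_of_isOpen hΩ (by norm_num)).clm_apply contDiffOn_const

lemma ContDiffOn.differentiableAt_pd (hΩ : IsOpen Ω) (hf : ContDiffOn ℝ 2 f Ω) (hx : x ∈ Ω)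
    (i : Fin N) : DifferentiableAt ℝ (pd f i) x :=
  (hf.contDiffOn_pd hΩ i).differentiableAt_of_isOpen hΩ hx one_ne_zero

lemma ContDiffOn.continuousOn_grad (hΩ : IsOpen Ω) (hf : ContDiffOn ℝ 2 f Ω) :
    ContinuousOn (grad f) Ω :=
  continuousOn_pi.2 fun i => (hf.contDiffOn_pd hΩ i).continuousOn

lemma ContDiffOn.continuousOn_hess (hΩ : IsOpen Ω) (hf : ContDiffOn ℝ 2 f Ω) :
    ContinuousOn (hess f) Ω :=
  continuousOn_pi.2 fun _ => continuousOn_pi.2 fun j =>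
    (((hf.contDiffOn_pd hΩ j).fderiv_of_isOpen (m := 0) hΩ (by norm_num)).clm_apply
      contDiffOn_const).continuousOn

lemma hess_mul (hΩ : IsOpen Ω) (hu : ContDiffOn ℝ 2 u Ω) (hv : ContDiffOn ℝ 2 v Ω)
    (hx : x ∈ Ω) :
    hess (fun y => u y * v y) x = v x • hess u x + vecMulVec (grad u x) (grad v x)
      + vecMulVec (grad v x) (grad u x) + u x • hess v x := by
  ext i j
  have hpd : pd (fun y => u y * v y) j =ᶠ[nhds x] fun y => v y * pd u j y + u y * pd v j y := by
    filter_upwards [hΩ.mem_nhds hx] with y hy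
    exact pd_mul (hu.differentiableAt_of_isOpen hΩ hy two_ne_zero)
      (hv.differentiableAt_of_isOpen hΩ hy two_ne_zero) j
  have du := hu.differentiableAt_of_isOpen hΩ hx two_ne_zero
  have dv := hv.differentiableAt_of_isOpen hΩ hx two_ne_zero
  have du' := hu.differentiableAt_pd hΩ hx j
  have dv' := hv.differentiableAt_pd hΩ hx j
  calc hess (fun y => u y * v y) x i j
      = pd (fun y => v y * pd u j y + u y * pd v j y) i x := by
        simp only [hess, of_apply, pd, hpd.fderiv_eq]
    _ = _ := by
      rw [pd_add_s5 (f := fun y => v y * pd u j y) (g := fun y => u y * pd v j y)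
        (dv.mul du') (du.mul dv'), pd_mul dv du', pd_mul du dv']
      simp only [hess, grad, Matrix.add_apply, Matrix.smul_apply, vecMulVec_apply, of_apply,
        smul_eq_mul]
      ring

lemma exists_continuousOn_lap1_mul_eq (hΩ : IsOpen Ω) (hu : ContDiffOn ℝ 2 u Ω)
    (hv : ContDiffOn ℝ 2 v Ω) :
    ∃ R : (Fin N → ℝ) → ℝ, ContinuousOn R Ω ∧ ∀ x ∈ Ω,
      lap1 (fun y => u y * v y) x = v x ^ 3 * lap1 u x + u x * R x := by
  set w := fun y => u y * v y
  refine ⟨fun x => v x ^ 2 * lap1Form (grad u x) (grad u x) (hess v x)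
      + v x * (lap1Form (grad u x) (grad v x) (hess w x)
        + lap1Form (grad v x) (grad u x) (hess w x))
      + u x * lap1Form (grad v x) (grad v x) (hess w x), ?_, fun x hx => ?_⟩
  · have := hu.continuousOn_grad hΩ
    have := hv.continuousOn_grad hΩ
    have := hv.continuousOn_hess hΩ
    have := (hu.mul hv).continuousOn_hess hΩ
    have := hu.continuousOn
    have := hv.continuousOn
    fun_prop
  · rw [lap1_eq_lap1Form, lap1_eq_lap1Form,
      grad_mul (hu.differentiableAt_of_isOpen hΩ hx two_ne_zero)
        (hv.differentiableAt_of_isOpen hΩ hx two_ne_zero)]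
    exact lap1Form_expand _ _ _ _ _ _ _ (hess_mul hΩ hu hv hx)

end derivatives

/-- `u` is an eigenfunction of `Δ₁` with continuous weight iff `u·v` is, for any
nonvanishing C² function `v`. -/
theorem eigen_lap1_mul_iff {N : ℕ} (Ω : Set (Fin N → ℝ)) (hΩ : IsOpen Ω)
    (u v : (Fin N → ℝ) → ℝ)
    (hu : ContDiffOn ℝ 2 u Ω) (hv : ContDiffOn ℝ 2 v Ω)
    (hvne : ∀ x ∈ Ω, v x ≠ 0) :
    (∃ μ : (Fin N → ℝ) → ℝ, ContinuousOn μ Ω ∧ ∀ x ∈ Ω, lap1 u x = μ x * u x) ↔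
    (∃ ν : (Fin N → ℝ) → ℝ, ContinuousOn ν Ω ∧
      ∀ x ∈ Ω, lap1 (fun y => u y * v y) x = ν x * (u x * v x)) := by
  obtain ⟨R, hRc, hR⟩ := exists_continuousOn_lap1_mul_eq hΩ hu hv
  have hvc := hv.continuousOn
  constructor
  · rintro ⟨μ, hμc, hμ⟩
    refine ⟨fun x => v x ^ 2 * μ x + R x / v x, by fun_prop (disch := assumption), fun x hx => ?_⟩
    rw [hR x hx, hμ x hx]
    field_simp [hvne x hx]
  · rintro ⟨ν, hνc, hν⟩
    have hv3 (x) (hx : x ∈ Ω) : v x ^ 3 ≠ 0 := pow_ne_zero 3 (hvne x hx)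
    refine ⟨fun x => (ν x * v x - R x) / v x ^ 3, by fun_prop (disch := assumption),
      fun x hx => ?_⟩
    rw [div_mul_eq_mul_div, eq_div_iff (hv3 x hx)]
    linear_combination hν x hx - hR x hx

end
end

section
/- Let u and v be orthogonal twin-harmonics on an open set Ω ⊆ ℝ^N with u(x) > 0 for all x ∈ Ω, let h(x) = u(x) + i·v(x), and let k ∈ ℝ. Define U(x) = Re(h(x)^k) and V(x) = Im(h(x)^k), where h^k = exp(k·log h) is the principal branch complex power (well defined since Re h = u > 0). Then U and V are orthogonal twin-harmonics on Ω. -/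
/-!
Write `h = u + i v`, `P = ∇h` and `Qᵢⱼ = ∂ᵢ∂ⱼh`. The gradient conditions say `∑ Pᵢ² = 0` and
the Laplacian condition says that `conj h · Δh` is real. Differentiating `∑ Pᵢ² = 0` gives
`∑ᵢ Pᵢ Qᵢⱼ = 0`, which kills all but one term when `Δ_∞u` and `Δ_∞v` are expanded in `P` and
`conj P`: `4 (Δ_∞u + i Δ_∞v) = ∑ Pᵢ Pⱼ conj Qᵢⱼ`. So the ∞-Laplacian condition says that
`conj h · ∑ Pᵢ Pⱼ conj Qᵢⱼ` is real.

For `F = φ ∘ h` with `φ` holomorphic, `∇F = φ'(h) P` and `∂ᵢ∂ⱼF = φ''(h) Pᵢ Pⱼ + φ'(h) Qᵢⱼ`, so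
these conditions pass to `F` whenever `conj φ · φ' · z` and `conj φ · φ'² · conj φ''` are real.
For `φ z = z ^ k` they are `k |z^k|²` and `k³ (k - 1) |z^(k-2)|⁴ |z|⁴`.
-/

noncomputable section

open Complex ComplexConjugate Topology

section

variable {N : ℕ}

/-- `z`, `P` and `Q` stand for the value, gradient and Hessian `Qᵢⱼ = ∂ᵢ∂ⱼh` of `h = u + i v` at a
point; the fields are the conditions on `(u, v)` rewritten in terms of `h`. -/
structure IsTwinJet (z : ℂ) (P : Fin N → ℂ) (Q : Fin N → Fin N → ℂ) : Prop where
  sum_sq : ∑ i, P i ^ 2 = 0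
  im_lap : (conj z * ∑ i, Q i i).im = 0
  im_infLap : (conj z * ∑ i, ∑ j, P i * P j * conj (Q i j)).im = 0

lemma sum_sq_eq_zero_iff (P : Fin N → ℂ) :
    ∑ i, P i ^ 2 = 0 ↔ ∑ i, (P i).re ^ 2 = ∑ i, (P i).im ^ 2 ∧ ∑ i, (P i).re * (P i).im = 0 := by
  have hre : (∑ i, P i ^ 2).re = ∑ i, (P i).re ^ 2 - ∑ i, (P i).im ^ 2 := by
    simp only [re_sum, ← Finset.sum_sub_distrib, pow_two, mul_re]
  have him : (∑ i, P i ^ 2).im = 2 * ∑ i, (P i).re * (P i).im := by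
    simp only [im_sum, Finset.mul_sum, pow_two, mul_im]
    exact Finset.sum_congr rfl fun i _ => by ring
  rw [Complex.ext_iff, hre, him, zero_re, zero_im, sub_eq_zero]
  exact and_congr Iff.rfl (by constructor <;> intro h <;> linarith)

lemma four_mul_re_mul_re_mul_re (a b c : ℂ) : 4 * (a.re * b.re * c.re)
    = (a * b * conj c).re + (a * b * c).re + (a * conj b * c).re + (conj a * b * c).re := by
  simp only [mul_re, mul_im, conj_re, conj_im]; ring

lemma four_mul_im_mul_im_mul_im (a b c : ℂ) : 4 * (a.im * b.im * c.im)
    = (a * b * conj c).im - (a * b * c).im + (a * conj b * c).im + (conj a * b * c).im := by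
  simp only [mul_re, mul_im, conj_re, conj_im]; ring

section Jet

variable {P : Fin N → ℂ} {Q : Fin N → Fin N → ℂ}

lemma sum_sum_mul_mul_eq_zero (hPQ : ∀ j, ∑ i, P i * Q i j = 0) (hQ : ∀ i j, Q i j = Q j i) :
    ∑ i, ∑ j, P i * P j * Q i j = 0 ∧ ∑ i, ∑ j, P i * conj (P j) * Q i j = 0 ∧
      ∑ i, ∑ j, conj (P i) * P j * Q i j = 0 := by
  have hrow : ∀ i, ∑ j, P j * Q i j = 0 := fun i => by simpa only [hQ i] using hPQ i
  refine ⟨?_, ?_, ?_⟩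
  · rw [Finset.sum_comm]
    refine Finset.sum_eq_zero fun j _ => ?_
    simp only [mul_right_comm _ (P j), ← Finset.sum_mul, hPQ, zero_mul]
  · rw [Finset.sum_comm]
    refine Finset.sum_eq_zero fun j _ => ?_
    simp only [mul_right_comm _ (conj (P j)), ← Finset.sum_mul, hPQ, zero_mul]
  · refine Finset.sum_eq_zero fun i _ => ?_
    simp only [mul_assoc, ← Finset.mul_sum, hrow, mul_zero]

lemma four_mul_sum_re_mul_re_mul_re (hPQ : ∀ j, ∑ i, P i * Q i j = 0) (hQ : ∀ i j, Q i j = Q j i) :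
    4 * ∑ i, ∑ j, (P i).re * (P j).re * (Q i j).re
      = (∑ i, ∑ j, P i * P j * conj (Q i j)).re := by
  obtain ⟨h₁, h₂, h₃⟩ := sum_sum_mul_mul_eq_zero hPQ hQ
  have := congrArg re (congrArg₂ (· + ·) (congrArg₂ (· + ·) h₁ h₂) h₃)
  simp only [Finset.mul_sum, four_mul_re_mul_re_mul_re, re_sum, Finset.sum_add_distrib, add_re,
    zero_re, add_zero] at this ⊢
  linarith

lemma four_mul_sum_im_mul_im_mul_im (hPQ : ∀ j, ∑ i, P i * Q i j = 0) (hQ : ∀ i j, Q i j = Q j i) :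
    4 * ∑ i, ∑ j, (P i).im * (P j).im * (Q i j).im
      = (∑ i, ∑ j, P i * P j * conj (Q i j)).im := by
  obtain ⟨h₁, h₂, h₃⟩ := sum_sum_mul_mul_eq_zero hPQ hQ
  have := congrArg im (congrArg₂ (· + ·) (congrArg₂ (· - ·) h₂ h₁) h₃)
  simp only [Finset.mul_sum, four_mul_im_mul_im_mul_im, im_sum, Finset.sum_add_distrib,
    Finset.sum_sub_distrib, add_im, sub_im, zero_im, add_zero, sub_zero] at this ⊢
  linarith

lemma isTwinJet_iff (z : ℂ) (hPQ : ∀ j, ∑ i, P i * Q i j = 0) (hQ : ∀ i j, Q i j = Q j i) :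
    IsTwinJet z P Q ↔
      z.im * ∑ i, (Q i i).re = z.re * ∑ i, (Q i i).im ∧
      z.im * ∑ i, ∑ j, (P i).re * (P j).re * (Q i j).re
        = z.re * ∑ i, ∑ j, (P i).im * (P j).im * (Q i j).im ∧
      ∑ i, (P i).re ^ 2 = ∑ i, (P i).im ^ 2 ∧ ∑ i, (P i).re * (P i).im = 0 := by
  have hre := four_mul_sum_re_mul_re_mul_re hPQ hQ
  have him := four_mul_sum_im_mul_im_mul_im hPQ hQ
  have him_conj_mul (w : ℂ) : (conj z * w).im = z.re * w.im - z.im * w.re := by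
    rw [mul_im, conj_re, conj_im]; ring
  rw [← sum_sq_eq_zero_iff]
  constructor
  · rintro ⟨hsq, hlap, hinf⟩
    rw [him_conj_mul, re_sum, im_sum] at hlap
    rw [him_conj_mul, ← hre, ← him] at hinf
    exact ⟨by linarith, by linear_combination -hinf / 4, hsq⟩
  · rintro ⟨hlap, hinf, hsq⟩
    refine ⟨hsq, ?_, ?_⟩
    · rw [him_conj_mul, re_sum, im_sum]; linarith
    · rw [him_conj_mul, ← hre, ← him]; linear_combination -4 * hinf

end Jet

lemma im_mul_eq_zero_of_im_conj_mul_eq_zero {z a w : ℂ} (hz : z ≠ 0) (ha : (a * z).im = 0)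
    (hw : (conj z * w).im = 0) : (a * w).im = 0 := by
  have h : a * w * (normSq z : ℂ) = (a * z) * (conj z * w) := by rw [← mul_conj]; ring
  have h' := congrArg im h
  rw [im_mul_ofReal, mul_im (a * z), ha, hw, mul_zero, zero_mul, add_zero] at h'
  exact (mul_eq_zero.mp h').resolve_right (normSq_pos.mpr hz).ne'

theorem IsTwinJet.comp {z H A B : ℂ} {P : Fin N → ℂ} {Q : Fin N → Fin N → ℂ}
    (hjet : IsTwinJet z P Q) (hz : z ≠ 0) (hA : (conj H * A * z).im = 0)
    (hB : (conj H * A ^ 2 * conj B).im = 0) :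
    IsTwinJet H (fun i => A * P i) (fun i j => B * P i * P j + A * Q i j) where
  sum_sq := by simp only [mul_pow, ← Finset.mul_sum, hjet.sum_sq, mul_zero]
  im_lap := by
    have hsum : ∑ i, (B * P i * P i + A * Q i i) = A * ∑ i, Q i i := by
      simp only [Finset.sum_add_distrib, mul_assoc, ← Finset.mul_sum, ← pow_two, hjet.sum_sq,
        mul_zero, zero_add]
    rw [hsum, ← mul_assoc]
    exact im_mul_eq_zero_of_im_conj_mul_eq_zero hz hA hjet.im_lap
  im_infLap := by
    set S := ∑ i, ∑ j, P i * P j * conj (Q i j)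
    have hnorm : ∑ i, P i * conj (P i) = ((∑ i, normSq (P i) : ℝ) : ℂ) := by
      push_cast; simp only [mul_conj]
    have hsum : ∑ i, ∑ j, A * P i * (A * P j) * conj (B * P i * P j + A * Q i j)
        = A ^ 2 * conj B * ((∑ i, P i * conj (P i)) * ∑ j, P j * conj (P j))
          + A * conj A * (A * S) := by
      rw [Finset.sum_mul_sum, Finset.mul_sum, Finset.mul_sum, Finset.mul_sum,
        ← Finset.sum_add_distrib]
      refine Finset.sum_congr rfl fun i _ => ?_
      rw [Finset.mul_sum, Finset.mul_sum, Finset.mul_sum, ← Finset.sum_add_distrib]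
      refine Finset.sum_congr rfl fun j _ => ?_
      simp only [map_add, map_mul]; ring
    have hS : (conj H * A * S).im = 0 :=
      im_mul_eq_zero_of_im_conj_mul_eq_zero hz hA hjet.im_infLap
    have hsplit : conj H * (A ^ 2 * conj B * ((∑ i, P i * conj (P i)) * ∑ j, P j * conj (P j))
          + A * conj A * (A * S))
        = conj H * A ^ 2 * conj B * (((∑ i, normSq (P i)) ^ 2 : ℝ) : ℂ)
          + (normSq A : ℂ) * (conj H * A * S) := by
      rw [hnorm, mul_conj]; push_cast; ring
    rw [hsum, hsplit, add_im, im_mul_ofReal, im_ofReal_mul, hB, hS, zero_mul, mul_zero, add_zero]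

section Cpow

variable {z : ℂ} (k : ℝ)

lemma cpow_sub_one_mul_self (hz : z ≠ 0) (c : ℂ) : z ^ (c - 1) * z = z ^ c := by
  simpa using (cpow_add (c - 1) 1 hz).symm

lemma im_conj_cpow_mul_cpow_sub_one_mul_self (hz : z ≠ 0) :
    (conj (z ^ (k : ℂ)) * (k * z ^ ((k : ℂ) - 1)) * z).im = 0 := by
  rw [← cpow_sub_one_mul_self hz (k : ℂ)]
  set b := z ^ ((k : ℂ) - 1)
  have hreal : conj (b * z) * (k * b) * z = ((k * normSq b * normSq z : ℝ) : ℂ) := by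
    push_cast; rw [← mul_conj, ← mul_conj]; simp only [map_mul]; ring
  rw [hreal, ofReal_im]

lemma im_conj_cpow_mul_cpow_sub_one_sq_mul_conj_cpow_sub_two (hz : z ≠ 0) :
    (conj (z ^ (k : ℂ)) * (k * z ^ ((k : ℂ) - 1)) ^ 2
      * conj (k * ((k - 1) * z ^ ((k : ℂ) - 1 - 1)))).im = 0 := by
  rw [← cpow_sub_one_mul_self hz (k : ℂ), ← cpow_sub_one_mul_self hz ((k : ℂ) - 1)]
  set a := z ^ ((k : ℂ) - 1 - 1)
  have hreal : conj (a * z * z) * (k * (a * z)) ^ 2 * conj (k * ((k - 1) * a))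
      = ((k ^ 3 * (k - 1) * normSq a ^ 2 * normSq z ^ 2 : ℝ) : ℂ) := by
    push_cast; rw [← mul_conj, ← mul_conj]
    simp only [map_mul, map_sub, map_one, conj_ofReal]; ring
  rw [hreal, ofReal_im]

end Cpow

def cpd (G : (Fin N → ℝ) → ℂ) (i : Fin N) (x : Fin N → ℝ) : ℂ :=
  fderiv ℝ G x (Pi.single i 1)

section PartialDerivatives

variable {G : (Fin N → ℝ) → ℂ} {x : Fin N → ℝ}

lemma pd_re (hG : DifferentiableAt ℝ G x) (i : Fin N) :
    pd (fun y => (G y).re) i x = (cpd G i x).re := by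
  have h : HasFDerivAt (fun y => (G y).re) (reCLM.comp (fderiv ℝ G x)) x :=
    reCLM.hasFDerivAt.comp x hG.hasFDerivAt
  rw [pd, h.fderiv]
  rfl

lemma pd_im (hG : DifferentiableAt ℝ G x) (i : Fin N) :
    pd (fun y => (G y).im) i x = (cpd G i x).im := by
  have h : HasFDerivAt (fun y => (G y).im) (imCLM.comp (fderiv ℝ G x)) x :=
    imCLM.hasFDerivAt.comp x hG.hasFDerivAt
  rw [pd, h.fderiv]
  rfl

lemma Filter.EventuallyEq.cpd_eq {G' : (Fin N → ℝ) → ℂ} (h : G =ᶠ[𝓝 x] G') (i : Fin N) :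
    cpd G i x = cpd G' i x := by
  rw [cpd, cpd, h.fderiv_eq]

lemma cpd_comp {φ : ℂ → ℂ} {φ' : ℂ} (hφ : HasDerivAt φ φ' (G x)) (hG : DifferentiableAt ℝ G x)
    (i : Fin N) : cpd (fun y => φ (G y)) i x = φ' * cpd G i x := by
  have h : HasFDerivAt (fun y => φ (G y)) (φ' • fderiv ℝ G x) x :=
    hφ.comp_hasFDerivAt x hG.hasFDerivAt
  rw [cpd, cpd, h.fderiv]
  rfl

lemma cpd_mul {f g : (Fin N → ℝ) → ℂ} (hf : DifferentiableAt ℝ f x) (hg : DifferentiableAt ℝ g x)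
    (i : Fin N) : cpd (fun y => f y * g y) i x = cpd f i x * g x + f x * cpd g i x := by
  rw [cpd, cpd, cpd, (hf.hasFDerivAt.fun_mul hg.hasFDerivAt).fderiv]
  simp only [add_apply, smul_apply, smul_eq_mul]
  ring

lemma ContDiffAt.differentiableAt_cpd (hG : ContDiffAt ℝ 2 G x) (i : Fin N) :
    DifferentiableAt ℝ (cpd G i) x :=
  ((hG.fderiv_right (m := 1) le_rfl).differentiableAt one_ne_zero).clm_apply
    (differentiableAt_const _)

lemma ContDiffAt.eventually_differentiableAt (hG : ContDiffAt ℝ 2 G x) :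
    ∀ᶠ y in 𝓝 x, DifferentiableAt ℝ G y :=
  (hG.eventually (by simp)).mono fun _ hy => hy.differentiableAt two_ne_zero

lemma Filter.EventuallyEq.pd_eq_s8 {f g : (Fin N → ℝ) → ℝ} (h : f =ᶠ[𝓝 x] g) (i : Fin N) :
    pd f i x = pd g i x := by
  rw [pd, pd, h.fderiv_eq]

lemma pd_pd_re (hG : ContDiffAt ℝ 2 G x) (i j : Fin N) :
    pd (pd (fun y => (G y).re) j) i x = (cpd (cpd G j) i x).re := by
  rw [Filter.EventuallyEq.pd_eq_s8 (hG.eventually_differentiableAt.mono fun y hy => pd_re hy j),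
    pd_re (hG.differentiableAt_cpd j)]

lemma pd_pd_im (hG : ContDiffAt ℝ 2 G x) (i j : Fin N) :
    pd (pd (fun y => (G y).im) j) i x = (cpd (cpd G j) i x).im := by
  rw [Filter.EventuallyEq.pd_eq_s8 (hG.eventually_differentiableAt.mono fun y hy => pd_im hy j),
    pd_im (hG.differentiableAt_cpd j)]

lemma cpd_cpd_eq_fderiv_fderiv (hG : ContDiffAt ℝ 2 G x) (i j : Fin N) :
    cpd (cpd G j) i x = fderiv ℝ (fderiv ℝ G) x (Pi.single i 1) (Pi.single j 1) := by
  have h : HasFDerivAt (fun y => ContinuousLinearMap.apply ℝ ℂ (Pi.single j 1) (fderiv ℝ G y))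
      ((ContinuousLinearMap.apply ℝ ℂ (Pi.single j 1)).comp (fderiv ℝ (fderiv ℝ G) x)) x :=
    (ContinuousLinearMap.apply ℝ ℂ _).hasFDerivAt.comp x
      ((hG.fderiv_right (m := 1) le_rfl).differentiableAt one_ne_zero).hasFDerivAt
  exact congrArg (· (Pi.single i 1)) h.fderiv

lemma cpd_cpd_comm (hG : ContDiffAt ℝ 2 G x) (i j : Fin N) :
    cpd (cpd G j) i x = cpd (cpd G i) j x := by
  rw [cpd_cpd_eq_fderiv_fderiv hG, cpd_cpd_eq_fderiv_fderiv hG]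
  exact hG.isSymmSndFDerivAt (by simp) _ _

lemma sum_cpd_mul_cpd_cpd_eq_zero (hG : ContDiffAt ℝ 2 G x)
    (hiso : ∀ᶠ y in 𝓝 x, ∑ i, cpd G i y ^ 2 = 0) (j : Fin N) :
    ∑ i, cpd G i x * cpd (cpd G i) j x = 0 := by
  have hd : ∀ i, HasFDerivAt (cpd G i) (fderiv ℝ (cpd G i) x) x :=
    fun i => (hG.differentiableAt_cpd i).hasFDerivAt
  have h : HasFDerivAt (fun y => ∑ i, cpd G i y * cpd G i y)
      (∑ i, (cpd G i x • fderiv ℝ (cpd G i) x + cpd G i x • fderiv ℝ (cpd G i) x)) x :=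
    HasFDerivAt.fun_sum fun i _ => (hd i).fun_mul (hd i)
  have hiso' : (fun y => ∑ i, cpd G i y * cpd G i y) =ᶠ[𝓝 x] fun _ => 0 :=
    hiso.mono fun y hy => by simpa only [sq] using hy
  have hzero : cpd (fun y => ∑ i, cpd G i y * cpd G i y) j x = 0 := by
    rw [hiso'.cpd_eq, cpd, fderiv_const_apply, zero_apply]
  rw [cpd, h.fderiv] at hzero
  simp only [sum_apply, add_apply, smul_apply, smul_eq_mul, ← two_mul, ← Finset.mul_sum] at hzero
  exact (mul_eq_zero.mp hzero).resolve_left two_ne_zero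

lemma cpd_cpd_comp {φ φ' : ℂ → ℂ} {φ'' : ℂ}
    (hφ : ∀ᶠ y in 𝓝 x, HasDerivAt φ (φ' (G y)) (G y)) (hφ' : HasDerivAt φ' φ'' (G x))
    (hG : ContDiffAt ℝ 2 G x) (i j : Fin N) :
    cpd (cpd (fun y => φ (G y)) j) i x
      = φ'' * cpd G i x * cpd G j x + φ' (G x) * cpd (cpd G j) i x := by
  have hG₁ := hG.differentiableAt two_ne_zero
  have hev : cpd (fun y => φ (G y)) j =ᶠ[𝓝 x] fun y => φ' (G y) * cpd G j y :=
    (hφ.and hG.eventually_differentiableAt).mono fun y hy => cpd_comp hy.1 hy.2 j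
  have hφ'G : DifferentiableAt ℝ (fun y => φ' (G y)) x :=
    (hφ'.comp_hasFDerivAt x hG₁.hasFDerivAt).differentiableAt
  rw [hev.cpd_eq, cpd_mul hφ'G (hG.differentiableAt_cpd j), cpd_comp hφ' hG₁]

end PartialDerivatives

theorem twinHarmonics_re_im_iff {Ω : Set (Fin N → ℝ)} {G : (Fin N → ℝ) → ℂ} (hΩ : IsOpen Ω)
    (hG : ContDiffOn ℝ 2 G Ω) :
    TwinHarmonics (fun x => (G x).re) (fun x => (G x).im) Ω ↔
      ∀ x ∈ Ω, IsTwinJet (G x) (fun i => cpd G i x) (fun i j => cpd (cpd G j) i x) := by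
  have hG₂ : ∀ x ∈ Ω, ContDiffAt ℝ 2 G x := fun x hx => hG.contDiffAt (hΩ.mem_nhds hx)
  have hG₁ : ∀ x ∈ Ω, DifferentiableAt ℝ G x := fun x hx => (hG₂ x hx).differentiableAt two_ne_zero
  have hiso : ∀ x ∈ Ω, (∑ i, pd (fun y => (G y).re) i x ^ 2 = ∑ i, pd (fun y => (G y).im) i x ^ 2 ∧
      ∑ i, pd (fun y => (G y).re) i x * pd (fun y => (G y).im) i x = 0) ↔
        ∑ i, cpd G i x ^ 2 = 0 := fun x hx => by
    simp only [pd_re (hG₁ x hx), pd_im (hG₁ x hx), sum_sq_eq_zero_iff]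
  have hjet : ∀ x ∈ Ω, (∀ y ∈ Ω, ∑ i, cpd G i y ^ 2 = 0) →
      (((G x).im * lap (fun y => (G y).re) x = (G x).re * lap (fun y => (G y).im) x ∧
        (G x).im * infLap (fun y => (G y).re) x = (G x).re * infLap (fun y => (G y).im) x ∧
        ∑ i, pd (fun y => (G y).re) i x ^ 2 = ∑ i, pd (fun y => (G y).im) i x ^ 2 ∧
        ∑ i, pd (fun y => (G y).re) i x * pd (fun y => (G y).im) i x = 0) ↔
      IsTwinJet (G x) (fun i => cpd G i x) (fun i j => cpd (cpd G j) i x)) := fun x hx hsq => by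
    have hsym := cpd_cpd_comm (hG₂ x hx)
    have hPQ (j : Fin N) : ∑ i, cpd G i x * cpd (cpd G j) i x = 0 := by
      simpa only [hsym _ j] using sum_cpd_mul_cpd_cpd_eq_zero (hG₂ x hx)
        (Filter.eventually_of_mem (hΩ.mem_nhds hx) hsq) j
    rw [isTwinJet_iff _ hPQ fun i j => hsym i j]
    simp only [lap, infLap, pd_re (hG₁ x hx), pd_im (hG₁ x hx), pd_pd_re (hG₂ x hx),
      pd_pd_im (hG₂ x hx)]
  constructor
  · rintro ⟨-, -, htwin⟩ x hx
    exact (hjet x hx fun y hy => (hiso y hy).1 (htwin y hy).2.2).1 (htwin x hx)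
  · intro hjets
    refine ⟨reCLM.contDiff.comp_contDiffOn hG, imCLM.contDiff.comp_contDiffOn hG, fun x hx => ?_⟩
    exact (hjet x hx fun y hy => (hjets y hy).sum_sq).2 (hjets x hx)

theorem twinHarmonics_comp {Ω : Set (Fin N → ℝ)} {G : (Fin N → ℝ) → ℂ} {U : Set ℂ}
    {φ φ' φ'' : ℂ → ℂ} (hΩ : IsOpen Ω) (hG : ContDiffOn ℝ 2 G Ω)
    (htwin : TwinHarmonics (fun x => (G x).re) (fun x => (G x).im) Ω)
    (hU : IsOpen U) (hGU : Set.MapsTo G Ω U) (hU₀ : ∀ z ∈ U, z ≠ 0)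
    (hφ : ∀ z ∈ U, HasDerivAt φ (φ' z) z) (hφ' : ∀ z ∈ U, HasDerivAt φ' (φ'' z) z)
    (hA : ∀ z ∈ U, (conj (φ z) * φ' z * z).im = 0)
    (hB : ∀ z ∈ U, (conj (φ z) * φ' z ^ 2 * conj (φ'' z)).im = 0) :
    TwinHarmonics (fun x => (φ (G x)).re) (fun x => (φ (G x)).im) Ω := by
  have hφG : ContDiffOn ℝ 2 (fun x => φ (G x)) Ω :=
    ((DifferentiableOn.contDiffOn (fun z hz => (hφ z hz).differentiableAt.differentiableWithinAt)
      hU).restrict_scalars ℝ).comp hG hGU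
  rw [twinHarmonics_re_im_iff hΩ hφG]
  intro x hx
  have hGx := hG.contDiffAt (hΩ.mem_nhds hx)
  have hev : ∀ᶠ y in 𝓝 x, HasDerivAt φ (φ' (G y)) (G y) :=
    Filter.mem_of_superset (hGx.continuousAt.preimage_mem_nhds (hU.mem_nhds (hGU hx)))
      fun y hy => hφ _ hy
  have hgrad : (fun i => cpd (fun y => φ (G y)) i x) = fun i => φ' (G x) * cpd G i x :=
    funext (cpd_comp (hφ _ (hGU hx)) (hGx.differentiableAt two_ne_zero))
  have hhess : (fun i j => cpd (cpd (fun y => φ (G y)) j) i x)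
      = fun i j => φ'' (G x) * cpd G i x * cpd G j x + φ' (G x) * cpd (cpd G j) i x :=
    funext₂ (cpd_cpd_comp hev (hφ' _ (hGU hx)) hGx)
  rw [hgrad, hhess]
  exact ((twinHarmonics_re_im_iff hΩ hG).1 htwin x hx).comp (hU₀ _ (hGU hx)) (hA _ (hGU hx))
    (hB _ (hGU hx))

end

/-- If `(u, v)` are orthogonal twin-harmonics on an open `Ω ⊆ ℝ^N` with `u > 0`,
`h = u + i·v` and `k ∈ ℝ`, then `(Re (h^k), Im (h^k))` are orthogonal twin-harmonics on `Ω`,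
where `h^k` is the principal-branch complex power. -/
theorem twinHarmonics_cpow {N : ℕ}
    (Ω : Set (Fin N → ℝ)) (hΩ : IsOpen Ω)
    (u v : (Fin N → ℝ) → ℝ)
    (huv : TwinHarmonics u v Ω) (hu : ∀ x ∈ Ω, 0 < u x) (k : ℝ) :
    TwinHarmonics
      (fun x => (((u x : ℂ) + (v x : ℂ) * Complex.I) ^ (k : ℂ)).re)
      (fun x => (((u x : ℂ) + (v x : ℂ) * Complex.I) ^ (k : ℂ)).im) Ω := by
  have hh : ContDiffOn ℝ 2 (fun x => (u x : ℂ) + (v x : ℂ) * I) Ω :=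
    (ofRealCLM.contDiff.comp_contDiffOn huv.1).add
      ((ofRealCLM.contDiff.comp_contDiffOn huv.2.1).mul contDiffOn_const)
  have hslit : Set.MapsTo (fun x => (u x : ℂ) + (v x : ℂ) * I) Ω slitPlane := fun x hx =>
    mem_slitPlane_iff.2 (Or.inl (by simpa using hu x hx))
  refine twinHarmonics_comp (φ := fun z => z ^ (k : ℂ)) (φ' := fun z => k * z ^ ((k : ℂ) - 1))
    (φ'' := fun z => k * ((k - 1) * z ^ ((k : ℂ) - 1 - 1))) hΩ hh (by simpa using huv)
    isOpen_slitPlane hslit (fun _ => slitPlane_ne_zero) (fun z hz => ?_) (fun z hz => ?_)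
    (fun z hz => im_conj_cpow_mul_cpow_sub_one_mul_self k (slitPlane_ne_zero hz))
    (fun z hz => im_conj_cpow_mul_cpow_sub_one_sq_mul_conj_cpow_sub_two k (slitPlane_ne_zero hz))
  · exact (hasStrictDerivAt_cpow_const hz).hasDerivAt
  · exact ((hasStrictDerivAt_cpow_const hz).hasDerivAt.const_mul _)

end
end
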